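/- For any dataset, TMP_c equals the optimal value ε̄_c of the linear program: minimize ∑_t ε_t over u ∈ ℝ^T, ε ∈ ℝ_+^T subject to u_s ≤ u_t + p^t·(x^s - x^t) + ε_t for all pairs (s,t) with p^t·x^t ≥ p^t·x^s. -/

import Mathlib

/-!
Weak duality: summing the LP constraint for the pairs `(σ t, t)` of a constrained permutation `σ`
makes the potentials `u` telescope, so every constrained money pump is at most `∑ ε`.

Strong duality: fix a constrained permutation `π` with maximal money pump, and consider the graph
with an arc `s → π t` of cost `p t·x s - p t·x (π t)` whenever `t` could afford `x s`. A negative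
simple cycle would let the observations on it trade bundles along the cycle, giving a constrained
permutation with a larger money pump. With no negative cycles, cutting closed sub-walks out of a
walk never raises its cost, so the infimum of costs of walks starting at `s` is attained among
walks without repeated vertices. This infimum is a finite potential `u s`, and
`ε t := p t·x t - p t·x (π t) + u (π t) - u t` is feasible with `∑ ε` equal to the maximal
money pump.
-/

open Matrix BigOperators

namespace List

variable {α : Type*}

def walkCost (c : α → α → ℝ) : List α → ℝ
  | x :: y :: l => c x y + walkCost c (y :: l)
  | _ => 0

section walkCost

variable (c : α → α → ℝ)

@[simp] lemma walkCost_singleton (x : α) : walkCost c [x] = 0 := rfl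

@[simp] lemma walkCost_cons_cons (x y : α) (l : List α) :
    walkCost c (x :: y :: l) = c x y + walkCost c (y :: l) := rfl

lemma walkCost_eq_sum_zip :
    ∀ l : List α, walkCost c l = ((l.zip l.tail).map fun e => c e.1 e.2).sum
  | [] | [_] => rfl
  | x :: y :: l => by simp [walkCost_eq_sum_zip (y :: l)]

lemma walkCost_append_cons : ∀ (l₁ : List α) (y : α) (l₂ : List α),
    walkCost c (l₁ ++ y :: l₂) = walkCost c (l₁ ++ [y]) + walkCost c (y :: l₂)
  | [], _, _ | [_], _, _ => by simp
  | x :: x' :: l₁, y, l₂ => by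
    have ih := walkCost_append_cons (x' :: l₁) y l₂
    simp only [cons_append, walkCost_cons_cons] at ih ⊢
    rw [ih]
    ring

lemma walkCost_append_cons_append_cons (l₁ : List α) (y : α) (l₂ l₃ : List α) :
    walkCost c (l₁ ++ y :: l₂ ++ y :: l₃) =
      walkCost c (l₁ ++ y :: l₃) + walkCost c (y :: l₂ ++ [y]) := by
  have h₁ := walkCost_append_cons c l₁ y (l₂ ++ y :: l₃)
  have h₂ := walkCost_append_cons c (y :: l₂) y l₃
  have h₃ := walkCost_append_cons c l₁ y l₃
  simp only [cons_append, append_assoc] at h₁ h₂ h₃ ⊢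
  linarith

end walkCost

variable {r : α → α → Prop}

lemma IsChain.rel_of_mem_zip_tail : ∀ {l : List α}, IsChain r l → ∀ e ∈ l.zip l.tail, r e.1 e.2
  | [], _ | [_], _ => by simp
  | x :: y :: l, h => by
    rw [isChain_cons_cons] at h
    simp only [tail_cons, zip_cons_cons, mem_cons]
    rintro e (rfl | he)
    exacts [h.1, h.2.rel_of_mem_zip_tail e he]

lemma IsChain.of_append_cons_append_cons {l₁ l₂ l₃ : List α} {y : α}
    (h : IsChain r (l₁ ++ y :: l₂ ++ y :: l₃)) :
    IsChain r (l₁ ++ y :: l₃) ∧ IsChain r (y :: l₂ ++ [y]) := by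
  refine ⟨?_, h.infix ⟨l₁, l₃, by simp⟩⟩
  have := IsChain.append_overlap (l₁ := l₁) (l₂ := [y]) (l₃ := l₃)
    (h.infix ⟨[], l₂ ++ y :: l₃, by simp⟩) (h.infix ⟨l₁ ++ y :: l₂, [], by simp⟩) (cons_ne_nil y [])
  simpa using this

lemma exists_append_cons_append_cons_of_not_nodup :
    ∀ {l : List α}, ¬ l.Nodup → ∃ l₁ y l₂ l₃, l = l₁ ++ y :: l₂ ++ y :: l₃ ∧ (y :: l₂).Nodup
  | [], h => absurd nodup_nil h
  | u :: l, h => by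
    by_cases hl : l.Nodup
    · have hu : u ∈ l := by by_contra hu; exact h (nodup_cons.mpr ⟨hu, hl⟩)
      obtain ⟨s, t, rfl⟩ := append_of_mem hu
      rw [nodup_append] at hl
      refine ⟨[], u, s, t, rfl, nodup_cons.mpr ⟨fun hs => ?_, hl.1⟩⟩
      exact hl.2.2 u hs u mem_cons_self rfl
    · obtain ⟨l₁, y, l₂, l₃, rfl, hy⟩ := exists_append_cons_append_cons_of_not_nodup hl
      exact ⟨u :: l₁, y, l₂, l₃, rfl, hy⟩

lemma zip_append_singleton_eq_map_formPerm [DecidableEq α] {y : α} {l : List α}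
    (hl : (y :: l).Nodup) :
    (y :: l ++ [y]).zip (y :: l ++ [y]).tail = (y :: l).map fun v => (v, (y :: l).formPerm v) := by
  have hrot : (y :: l ++ [y]).zip (y :: l ++ [y]).tail = (y :: l).zip ((y :: l).rotate 1) := by
    rw [rotate_cons_succ, rotate_zero, cons_append, tail_cons, ← cons_append,
      ← append_nil (l ++ [y]), zip_append (by simp), zip_nil_right, append_nil, append_nil]
  rw [hrot]
  refine ext_getElem (by simp) fun i h₁ h₂ => ?_
  simp only [getElem_zip, getElem_map, getElem_rotate, formPerm_apply_getElem _ hl]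

variable [DecidableEq α]

lemma IsChain.rel_formPerm {y : α} {l : List α} (hr : ∀ v, r v v) (hl : (y :: l).Nodup)
    (h : IsChain r (y :: l ++ [y])) (v : α) : r v ((y :: l).formPerm v) := by
  by_cases hv : v ∈ y :: l
  · have := h.rel_of_mem_zip_tail (v, (y :: l).formPerm v)
    rw [zip_append_singleton_eq_map_formPerm hl] at this
    exact this (mem_map_of_mem hv)
  · rw [formPerm_apply_of_notMem hv]
    exact hr v

lemma walkCost_append_singleton_eq_sum_formPerm [Fintype α] (c : α → α → ℝ)
    (hc : ∀ v, c v v = 0) {y : α} {l : List α} (hl : (y :: l).Nodup) :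
    walkCost c (y :: l ++ [y]) = ∑ v, c v ((y :: l).formPerm v) := by
  rw [walkCost_eq_sum_zip, zip_append_singleton_eq_map_formPerm hl, map_map,
    ← List.sum_toFinset _ hl]
  refine Finset.sum_subset (Finset.subset_univ _) fun v _ hv => ?_
  rw [Function.comp_apply, formPerm_apply_of_notMem (mem_toFinset.not.mp hv), hc]

lemma exists_nodup_walkCost_le [Fintype α] {c : α → α → ℝ} (hr : ∀ v, r v v)
    (hc : ∀ v, c v v = 0) (hcyc : ∀ ρ : Equiv.Perm α, (∀ v, r v (ρ v)) → 0 ≤ ∑ v, c v (ρ v)) :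
    ∀ l : List α, IsChain r l →
      ∃ l', IsChain r l' ∧ l'.Nodup ∧ l'.head? = l.head? ∧ walkCost c l' ≤ walkCost c l
  | l, hl => by
    by_cases hnd : l.Nodup
    · exact ⟨l, hl, hnd, rfl, le_rfl⟩
    obtain ⟨l₁, y, l₂, l₃, hsplit, hy⟩ := exists_append_cons_append_cons_of_not_nodup hnd
    have hshorter : (l₁ ++ y :: l₃).length < l.length := by simp [hsplit]
    rw [hsplit] at hl ⊢
    obtain ⟨hrest, hcycle⟩ := hl.of_append_cons_append_cons
    have hcycle_nonneg : 0 ≤ walkCost c (y :: l₂ ++ [y]) := by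
      rw [walkCost_append_singleton_eq_sum_formPerm c hc hy]
      exact hcyc _ (hcycle.rel_formPerm hr hy)
    obtain ⟨l', hl', hnd', hhead, hle⟩ :=
      exists_nodup_walkCost_le hr hc hcyc (l₁ ++ y :: l₃) hrest
    refine ⟨l', hl', hnd', ?_, ?_⟩
    · rw [hhead]
      cases l₁ <;> rfl
    · rw [walkCost_append_cons_append_cons]
      linarith
termination_by l => l.length
decreasing_by exact hshorter

end List

open List in
theorem exists_potential_of_perm_sum_nonneg {α : Type*} [Fintype α] {r : α → α → Prop}
    {c : α → α → ℝ} (hr : ∀ v, r v v) (hc : ∀ v, c v v = 0)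
    (hcyc : ∀ ρ : Equiv.Perm α, (∀ v, r v (ρ v)) → 0 ≤ ∑ v, c v (ρ v)) :
    ∃ u : α → ℝ, ∀ s s', r s s' → u s ≤ c s s' + u s' := by
  classical
  set walks : α → Set ℝ := fun s => walkCost c '' {l | IsChain r l ∧ l.head? = some s}
  obtain ⟨b, hb⟩ : BddBelow (walkCost c '' {l : List α | l.Nodup}) :=
    ((finite_length_le α (Fintype.card α)).subset fun _ => Nodup.length_le_card).image _
      |>.bddBelow
  have hwalks : ∀ s, BddBelow (walks s) := by
    refine fun s => ⟨b, ?_⟩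
    rintro _ ⟨l, ⟨hl, -⟩, rfl⟩
    obtain ⟨l', -, hnd, -, hle⟩ := exists_nodup_walkCost_le hr hc hcyc l hl
    exact (hb ⟨l', hnd, rfl⟩).trans hle
  refine ⟨fun s => sInf (walks s), fun s s' hss' => ?_⟩
  suffices sInf (walks s) - c s s' ≤ sInf (walks s') by linarith
  refine le_csInf ⟨0, [s'], ⟨isChain_singleton s', rfl⟩, rfl⟩ ?_
  rintro _ ⟨_ | ⟨t, m⟩, ⟨hm, hhead⟩, rfl⟩
  · cases hhead
  · obtain rfl : s' = t := (Option.some_injective _ hhead).symm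
    have := csInf_le (hwalks s) ⟨s :: s' :: m, ⟨isChain_cons_cons.mpr ⟨hss', hm⟩, rfl⟩, rfl⟩
    rw [walkCost_cons_cons] at this
    linarith

namespace MoneyPump

-- `e t s` is the expenditure `p t ⬝ᵥ x s` of bundle `s` at the prices of observation `t`.
variable {α : Type*} [Fintype α] (e : α → α → ℝ)

def IsConstrained (σ : Equiv.Perm α) : Prop := ∀ t, e t (σ t) ≤ e t t

def pump (σ : Equiv.Perm α) : ℝ := ∑ t, (e t t - e t (σ t))

variable {e}

lemma pump_le_sum_of_feasible {σ : Equiv.Perm α} (hσ : IsConstrained e σ) {u ε : α → ℝ}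
    (hu : ∀ s t, e t s ≤ e t t → u s ≤ u t + (e t s - e t t) + ε t) :
    pump e σ ≤ ∑ t, ε t := by
  calc pump e σ ≤ ∑ t, (ε t + (u t - u (σ t))) :=
        Finset.sum_le_sum fun t _ => by linarith [hu (σ t) t (hσ t)]
    _ = ∑ t, ε t := by
        rw [Finset.sum_add_distrib, Finset.sum_sub_distrib, Equiv.sum_comp σ u, sub_self,
          add_zero]

lemma exists_max_pump :
    ∃ π, IsConstrained e π ∧ ∀ σ, IsConstrained e σ → pump e σ ≤ pump e π :=
  Set.exists_max_image {σ | IsConstrained e σ} (pump e) (Set.toFinite _) ⟨1, fun _ => le_rfl⟩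

theorem exists_feasible_sum_eq_pump {π : Equiv.Perm α} (hπ : IsConstrained e π)
    (hmax : ∀ σ, IsConstrained e σ → pump e σ ≤ pump e π) :
    ∃ u ε : α → ℝ, (∀ t, 0 ≤ ε t) ∧
      (∀ s t, e t s ≤ e t t → u s ≤ u t + (e t s - e t t) + ε t) ∧ ∑ t, ε t = pump e π := by
  obtain ⟨u, hu⟩ := exists_potential_of_perm_sum_nonneg
    (r := fun s s' => e (π.symm s') s ≤ e (π.symm s') (π.symm s'))
    (c := fun s s' => e (π.symm s') s - e (π.symm s') s')
    (fun v => by simpa using hπ (π.symm v)) (fun v => sub_self _) fun ρ hρ => by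
      set σ := π.trans ρ.symm
      have hσ : IsConstrained e σ := fun t => by simpa [σ] using hρ (σ t)
      calc (0 : ℝ) ≤ pump e π - pump e σ := sub_nonneg.mpr (hmax σ hσ)
        _ = ∑ t, (e t (σ t) - e t (π t)) := by
          simp only [pump, ← Finset.sum_sub_distrib]; congr; ext; ring
        _ = ∑ v, (e (π.symm (ρ v)) v - e (π.symm (ρ v)) (ρ v)) := by
          rw [← Equiv.sum_comp σ fun v => e (π.symm (ρ v)) v - e (π.symm (ρ v)) (ρ v)]
          simp [σ]
  have hu' : ∀ s t, e t s ≤ e t t → u s ≤ e t s - e t (π t) + u (π t) := fun s t h =>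
    by simpa using hu s (π t) (by simpa using h)
  refine ⟨u, fun t => e t t - e t (π t) + u (π t) - u t, fun t => ?_, fun s t h => ?_, ?_⟩
  · linarith [hu' t t le_rfl]
  · linarith [hu' s t h]
  · simp only [Finset.sum_sub_distrib, Finset.sum_add_distrib, Equiv.sum_comp π u, pump]
    ring

variable (e) in
theorem sSup_pump_eq_sInf_feasible :
    sSup {v : ℝ | ∃ σ, IsConstrained e σ ∧ v = pump e σ} =
      sInf {v : ℝ | ∃ u ε : α → ℝ, (∀ t, 0 ≤ ε t) ∧
        (∀ s t, e t s ≤ e t t → u s ≤ u t + (e t s - e t t) + ε t) ∧ v = ∑ t, ε t} := by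
  obtain ⟨π, hπ, hmax⟩ := exists_max_pump (e := e)
  obtain ⟨u, ε, hε, hu, hsum⟩ := exists_feasible_sum_eq_pump hπ hmax
  rw [IsGreatest.csSup_eq (a := pump e π), IsLeast.csInf_eq (a := pump e π)]
  · exact ⟨⟨u, ε, hε, hu, hsum.symm⟩,
      fun _ ⟨_, _, _, hu, hv⟩ => hv ▸ pump_le_sum_of_feasible hπ hu⟩
  · exact ⟨⟨π, hπ, rfl⟩, fun _ ⟨σ, hσ, hv⟩ => hv ▸ hmax σ hσ⟩

end MoneyPump

theorem constrained_tmp_eq_lp_value_general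
    {L T : ℕ} (p x : Fin T → Fin L → ℝ) :
    sSup {v : ℝ | ∃ σ : Equiv.Perm (Fin T),
        (∀ t, p t ⬝ᵥ x (σ t) ≤ p t ⬝ᵥ x t) ∧
        v = ∑ t, (p t ⬝ᵥ x t - p t ⬝ᵥ x (σ t))} =
      sInf {v : ℝ | ∃ u ε : Fin T → ℝ, (∀ t, 0 ≤ ε t) ∧
        (∀ s t : Fin T, p t ⬝ᵥ x s ≤ p t ⬝ᵥ x t →
          u s ≤ u t + (p t ⬝ᵥ x s - p t ⬝ᵥ x t) + ε t) ∧
        v = ∑ t, ε t} :=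
  MoneyPump.sSup_pump_eq_sInf_feasible fun t s => p t ⬝ᵥ x s

/-- the constrained total money pump `TMP_c` equals the optimal value
`ε̄_c` of the constrained linear program. -/
theorem constrained_tmp_eq_lp_value
    {L T : ℕ} (p x : Fin T → Fin L → ℝ)
    (hp : ∀ t i, 0 < p t i) (hx : ∀ t i, 0 ≤ x t i) :
    sSup {v : ℝ | ∃ σ : Equiv.Perm (Fin T),
        (∀ t, p t ⬝ᵥ x (σ t) ≤ p t ⬝ᵥ x t) ∧
        v = ∑ t, (p t ⬝ᵥ x t - p t ⬝ᵥ x (σ t))} =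
      sInf {v : ℝ | ∃ u ε : Fin T → ℝ, (∀ t, 0 ≤ ε t) ∧
        (∀ s t : Fin T, p t ⬝ᵥ x s ≤ p t ⬝ᵥ x t →
          u s ≤ u t + (p t ⬝ᵥ x s - p t ⬝ᵥ x t) + ε t) ∧
        v = ∑ t, ε t} :=
  constrained_tmp_eq_lp_value_general p x
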